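/- Fix a real m > 0 and set p* = (m+1)^{−1/m}. Let G^0, H^0 : ℤ → [0,1] be nondecreasing functions satisfying 0 ≤ G^0_k − G^0_{k−1} ≤ p* and 0 ≤ H^0_k − H^0_{k−1} ≤ p* for all k ∈ ℤ, and G^0_k ≤ H^0_k for all k ∈ ℤ. Define G^n and H^n inductively by F^{n+1}_k = F^n_k + (1/2)[(F^n_{k+1} − F^n_k)^{m+1} − (F^n_k − F^n_{k−1})^{m+1}]. Then for all n ∈ ℕ and all k ∈ ℤ: G^n_k ≤ H^n_k, 0 ≤ G^n_k − G^n_{k−1} ≤ p*, and 0 ≤ H^n_k − H^n_{k−1} ≤ p*. -/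

import Mathlib

/-!
On `[0, p*]` the flux `x ↦ x ^ (m + 1)` is nondecreasing and `1`-Lipschitz, because its derivative
`(m + 1) x ^ m` is at most `(m + 1) p* ^ m = 1` there. Writing `a, d, c` for the increments of `F`
at `k - 1, k, k + 1`, the increment of the updated profile at `k` is
`(d - d ^ (m + 1)) + (a ^ (m + 1) + c ^ (m + 1)) / 2`, which therefore lies in
`[0, (p* - p* ^ (m + 1)) + p* ^ (m + 1)] = [0, p*]`. The same two properties make the update
monotone in the profile: raising `F` by `e ≥ 0` at `k` changes each flux by at most `e`, and the
two fluxes enter with weight `1 / 2`. Both invariants then propagate by induction on `n`.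
-/

open Set

noncomputable section

namespace CooperativeMotion

def pStar (m : ℝ) : ℝ := (m + 1) ^ (-(1 / m))

def step (m : ℝ) (F : ℤ → ℝ) (k : ℤ) : ℝ :=
  F k + 1 / 2 * ((F (k + 1) - F k) ^ (m + 1) - (F k - F (k - 1)) ^ (m + 1))

def Admissible (m : ℝ) (F : ℤ → ℝ) : Prop :=
  ∀ k, F k - F (k - 1) ∈ Icc 0 (pStar m)

variable {m : ℝ}

lemma pStar_nonneg (hm : 0 < m) : 0 ≤ pStar m :=
  Real.rpow_nonneg (by linarith) _

lemma pStar_rpow (hm : 0 < m) : pStar m ^ m = (m + 1)⁻¹ := by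
  rw [pStar, ← Real.rpow_mul (by linarith), neg_mul, one_div_mul_cancel hm.ne', Real.rpow_neg_one]

lemma monotoneOn_sub_rpow_succ (hm : 0 < m) :
    MonotoneOn (fun x : ℝ => x - x ^ (m + 1)) (Icc 0 (pStar m)) := by
  have hderiv : ∀ x : ℝ, HasDerivAt (fun x : ℝ => x - x ^ (m + 1)) (1 - (m + 1) * x ^ m) x := by
    intro x
    exact (hasDerivAt_id' x).sub
      (by simpa using Real.hasDerivAt_rpow_const (x := x) (p := m + 1) (Or.inr (by linarith)))
  have hdiff : Differentiable ℝ (fun x : ℝ => x - x ^ (m + 1)) :=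
    fun x => (hderiv x).differentiableAt
  refine monotoneOn_of_deriv_nonneg (convex_Icc _ _) hdiff.continuous.continuousOn
    hdiff.differentiableOn fun x hx => ?_
  rw [interior_Icc] at hx
  have hxm : x ^ m ≤ (m + 1)⁻¹ :=
    pStar_rpow hm ▸ Real.rpow_le_rpow hx.1.le hx.2.le hm.le
  rw [(hderiv x).deriv, sub_nonneg]
  calc (m + 1) * x ^ m ≤ (m + 1) * (m + 1)⁻¹ := by gcongr
    _ = 1 := mul_inv_cancel₀ (by linarith)

lemma rpow_succ_sub_rpow_succ_le (hm : 0 < m) {u v : ℝ} (hv : 0 ≤ v) (hvu : v ≤ u)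
    (hu : u ≤ pStar m) : u ^ (m + 1) - v ^ (m + 1) ≤ u - v := by
  have := monotoneOn_sub_rpow_succ hm ⟨hv, hvu.trans hu⟩ ⟨hv.trans hvu, hu⟩ hvu
  dsimp only at this
  linarith

lemma rpow_succ_sub_rpow_succ_le_of_sub_le (hm : 0 < m) {u v e : ℝ}
    (hu : u ∈ Icc 0 (pStar m)) (hv : v ∈ Icc 0 (pStar m)) (he : 0 ≤ e) (huv : u - v ≤ e) :
    u ^ (m + 1) - v ^ (m + 1) ≤ e := by
  rcases le_total u v with h | h
  · have : u ^ (m + 1) ≤ v ^ (m + 1) := Real.rpow_le_rpow hu.1 h (by linarith)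
    linarith
  · linarith [rpow_succ_sub_rpow_succ_le hm hv.1 h hu.2]

lemma Admissible.mem_Icc_succ {F : ℤ → ℝ} (hF : Admissible m F) (k : ℤ) :
    F (k + 1) - F k ∈ Icc 0 (pStar m) := by
  simpa using hF (k + 1)

lemma step_sub_step (F : ℤ → ℝ) (k : ℤ) :
    step m F k - step m F (k - 1) =
      (F k - F (k - 1) - (F k - F (k - 1)) ^ (m + 1)) +
        ((F (k + 1) - F k) ^ (m + 1) + (F (k - 1) - F (k - 1 - 1)) ^ (m + 1)) / 2 := by
  rw [step, step, sub_add_cancel]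
  ring

lemma Admissible.step (hm : 0 < m) {F : ℤ → ℝ} (hF : Admissible m F) :
    Admissible m (step m F) := by
  intro k
  obtain ⟨hc0, hcp⟩ := hF.mem_Icc_succ k
  obtain ⟨hd0, hdp⟩ := hF k
  obtain ⟨ha0, hap⟩ := hF (k - 1)
  have hp := pStar_nonneg hm
  have hq : 0 ≤ m + 1 := by linarith
  have hd_lower : 0 ≤ F k - F (k - 1) - (F k - F (k - 1)) ^ (m + 1) := by
    simpa [Real.zero_rpow (by linarith : m + 1 ≠ 0)] using
      monotoneOn_sub_rpow_succ hm ⟨le_rfl, hp⟩ ⟨hd0, hdp⟩ hd0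
  have hd_upper : F k - F (k - 1) - (F k - F (k - 1)) ^ (m + 1) ≤ pStar m - pStar m ^ (m + 1) :=
    monotoneOn_sub_rpow_succ hm ⟨hd0, hdp⟩ ⟨hp, le_rfl⟩ hdp
  have hc_upper := Real.rpow_le_rpow hc0 hcp hq
  have ha_upper := Real.rpow_le_rpow ha0 hap hq
  have hc_nonneg := Real.rpow_nonneg hc0 (m + 1)
  have ha_nonneg := Real.rpow_nonneg ha0 (m + 1)
  rw [mem_Icc, step_sub_step]
  constructor <;> linarith

lemma step_le_step (hm : 0 < m) {F G : ℤ → ℝ} (hF : Admissible m F) (hG : Admissible m G)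
    (hFG : F ≤ G) : step m F ≤ step m G := by
  intro k
  have he : 0 ≤ G k - F k := sub_nonneg.2 (hFG k)
  have hright := rpow_succ_sub_rpow_succ_le_of_sub_le hm (hF.mem_Icc_succ k)
    (hG.mem_Icc_succ k) he (by linarith [hFG (k + 1)])
  have hleft := rpow_succ_sub_rpow_succ_le_of_sub_le hm (hG k) (hF k) he
    (by linarith [hFG (k - 1)])
  simp only [step]
  linarith

end CooperativeMotion

end

open CooperativeMotion in
theorem statement4 (m : ℝ) (hm : 0 < m)
    (G H : ℕ → ℤ → ℝ)
    (hG0inc : ∀ k : ℤ, 0 ≤ G 0 k - G 0 (k - 1) ∧ G 0 k - G 0 (k - 1) ≤ (m + 1) ^ (-(1 / m) : ℝ))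
    (hH0inc : ∀ k : ℤ, 0 ≤ H 0 k - H 0 (k - 1) ∧ H 0 k - H 0 (k - 1) ≤ (m + 1) ^ (-(1 / m) : ℝ))
    (hGH0 : ∀ k : ℤ, G 0 k ≤ H 0 k)
    (hGrec : ∀ (n : ℕ) (k : ℤ),
      G (n + 1) k = G n k + (1 / 2) * ((G n (k + 1) - G n k) ^ (m + 1) - (G n k - G n (k - 1)) ^ (m + 1)))
    (hHrec : ∀ (n : ℕ) (k : ℤ),
      H (n + 1) k = H n k + (1 / 2) * ((H n (k + 1) - H n k) ^ (m + 1) - (H n k - H n (k - 1)) ^ (m + 1))) :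
    ∀ (n : ℕ) (k : ℤ),
      G n k ≤ H n k ∧
      (0 ≤ G n k - G n (k - 1) ∧ G n k - G n (k - 1) ≤ (m + 1) ^ (-(1 / m) : ℝ)) ∧
      (0 ≤ H n k - H n (k - 1) ∧ H n k - H n (k - 1) ≤ (m + 1) ^ (-(1 / m) : ℝ)) := by
  have hGstep : ∀ n, G (n + 1) = step m (G n) := fun n => funext (hGrec n)
  have hHstep : ∀ n, H (n + 1) = step m (H n) := fun n => funext (hHrec n)
  have invariant : ∀ n, Admissible m (G n) ∧ Admissible m (H n) ∧ G n ≤ H n := by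
    intro n
    induction n with
    | zero => exact ⟨hG0inc, hH0inc, hGH0⟩
    | succ n ih =>
      obtain ⟨hG, hH, hGH⟩ := ih
      rw [hGstep, hHstep]
      exact ⟨hG.step hm, hH.step hm, step_le_step hm hG hH hGH⟩
  intro n k
  obtain ⟨hG, hH, hGH⟩ := invariant n
  exact ⟨hGH k, hG k, hH k⟩
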